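/- With the STEGR non-metricity conjugate P^{bc}{}_a = −¼Q^{bc}{}_a + ¼Q^{cb}{}_a + ¼Q_a{}^{bc} + ¼δ^c_a(Q^b − Q̃^b) − ⅛g^{bc}Q_a − ⅛δ^b_a Q^c and Λ_{Ra}{}^{cbd} = ¼(−g^{bc}δ^d_a + g^{cd}δ^b_a), the quantity Λ_{Ta}{}^{bc} := P^{bc}{}_a − (1/√(−g))∇_d(√(−g)Λ_{Ra}{}^{cbd}) equals ½Q^{[cb]}{}_a − ½δ^{[c}_a Q̃^{b]} + ½δ^{[c}_a Q^{b]}, and is therefore antisymmetric in its last two indices b,c. -/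

import Mathlib

noncomputable section

open scoped BigOperators

/-- Partial derivative of a scalar field on coordinate space along coordinate `i`. -/
def pd {n : ℕ} (i : Fin n) (f : (Fin n → ℝ) → ℝ) (x : Fin n → ℝ) : ℝ :=
  fderiv ℝ f x (Pi.single i 1)

/-- Non-metricity `Q_{abc} = ∇_a g_{bc}` of the connection `Γ^a_{bc}` (components
`Γ a b c`, with `b` the derivative index). -/
def nonmetQ {n : ℕ} (g : Fin n → Fin n → (Fin n → ℝ) → ℝ)
    (Γ : Fin n → Fin n → Fin n → (Fin n → ℝ) → ℝ) (a b c : Fin n) (x : Fin n → ℝ) : ℝ :=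
  pd a (g b c) x - ∑ d, Γ d a b x * g d c x - ∑ d, Γ d a c x * g b d x

/-- Torsion `T^a_{bc} = 2Γ^a_{[bc]} = Γ^a_{bc} − Γ^a_{cb}`. -/
def torsion {n : ℕ} (Γ : Fin n → Fin n → Fin n → (Fin n → ℝ) → ℝ)
    (a b c : Fin n) (x : Fin n → ℝ) : ℝ :=
  Γ a b c x - Γ a c b x

/-- Christoffel symbols (Levi-Civita connection) of the metric `g` with inverse `ginv`. -/
def christoffel {n : ℕ} (g ginv : Fin n → Fin n → (Fin n → ℝ) → ℝ)
    (a b c : Fin n) (x : Fin n → ℝ) : ℝ :=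
  (1 / 2) * ∑ d, ginv a d x * (pd b (g d c) x + pd c (g d b) x - pd d (g b c) x)

/-- Riemann curvature `R^a_{bcd} = 2∂_{[c}Γ^a_{d]b} + 2Γ^a_{[c|e|}Γ^e_{d]b}`. -/
def riem {n : ℕ} (Γ : Fin n → Fin n → Fin n → (Fin n → ℝ) → ℝ)
    (a b c d : Fin n) (x : Fin n → ℝ) : ℝ :=
  pd c (Γ a d b) x - pd d (Γ a c b) x
    + ∑ e, (Γ a c e x * Γ e d b x - Γ a d e x * Γ e c b x)

/-- Kronecker delta. -/
def kron {n : ℕ} (a b : Fin n) : ℝ := if a = b then 1 else 0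

/-- First trace of the non-metricity, `Q_a = Q_{ab}{}^b = g^{bc} Q_{abc}`. -/
def qTr {n : ℕ} (g ginv : Fin n → Fin n → (Fin n → ℝ) → ℝ)
    (Γ : Fin n → Fin n → Fin n → (Fin n → ℝ) → ℝ) (a : Fin n) (x : Fin n → ℝ) : ℝ :=
  ∑ b, ∑ c, ginv b c x * nonmetQ g Γ a b c x

/-- Second trace of the non-metricity, `Q̃_a = Q^b{}_{ba} = g^{bc} Q_{cba}`. -/
def qTil {n : ℕ} (g ginv : Fin n → Fin n → (Fin n → ℝ) → ℝ)
    (Γ : Fin n → Fin n → Fin n → (Fin n → ℝ) → ℝ) (a : Fin n) (x : Fin n → ℝ) : ℝ :=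
  ∑ b, ∑ c, ginv b c x * nonmetQ g Γ c b a x

/-- Raised first trace `Q^a = g^{ae} Q_e`. -/
def qTrUp {n : ℕ} (g ginv : Fin n → Fin n → (Fin n → ℝ) → ℝ)
    (Γ : Fin n → Fin n → Fin n → (Fin n → ℝ) → ℝ) (a : Fin n) (x : Fin n → ℝ) : ℝ :=
  ∑ e, ginv a e x * qTr g ginv Γ e x

/-- Raised second trace `Q̃^a = g^{ae} Q̃_e`. -/
def qTilUp {n : ℕ} (g ginv : Fin n → Fin n → (Fin n → ℝ) → ℝ)
    (Γ : Fin n → Fin n → Fin n → (Fin n → ℝ) → ℝ) (a : Fin n) (x : Fin n → ℝ) : ℝ :=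
  ∑ e, ginv a e x * qTil g ginv Γ e x

/-- `Q_a{}^{bc} = g^{be} g^{cf} Q_{aef}`. -/
def qDU {n : ℕ} (g ginv : Fin n → Fin n → (Fin n → ℝ) → ℝ)
    (Γ : Fin n → Fin n → Fin n → (Fin n → ℝ) → ℝ) (a b c : Fin n) (x : Fin n → ℝ) : ℝ :=
  ∑ e, ∑ f, ginv b e x * ginv c f x * nonmetQ g Γ a e f x

/-- `Q^{bc}{}_a = g^{be} g^{cf} Q_{efa}`. -/
def qUD {n : ℕ} (g ginv : Fin n → Fin n → (Fin n → ℝ) → ℝ)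
    (Γ : Fin n → Fin n → Fin n → (Fin n → ℝ) → ℝ) (b c a : Fin n) (x : Fin n → ℝ) : ℝ :=
  ∑ e, ∑ f, ginv b e x * ginv c f x * nonmetQ g Γ e f a x

/-- The tensor `Λ_{Ra}{}^{cbd} = ¼(−g^{bc} δ^d_a + g^{cd} δ^b_a)`. -/
def lamR {n : ℕ} (ginv : Fin n → Fin n → (Fin n → ℝ) → ℝ)
    (a c b d : Fin n) (x : Fin n → ℝ) : ℝ :=
  (1 / 4) * (-(ginv b c x) * kron d a + ginv c d x * kron b a)

/-- The covariant divergence `∑_d ∇_d (√(−g) Λ_{Ra}{}^{cbd})` of the weight `−1`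
tensor density `λ_{Ra}{}^{cbd} = √(−g) Λ_{Ra}{}^{cbd}`:
`∇_d λ_a{}^{cbd} = ∂_d λ_a{}^{cbd} + Γ^c_{de} λ_a{}^{ebd} + Γ^b_{de} λ_a{}^{ced}
  + Γ^d_{de} λ_a{}^{cbe} − Γ^e_{da} λ_e{}^{cbd} − Γ^e_{de} λ_a{}^{cbd}`. -/
def covDivLamR {n : ℕ} (ginv : Fin n → Fin n → (Fin n → ℝ) → ℝ)
    (Γ : Fin n → Fin n → Fin n → (Fin n → ℝ) → ℝ)
    (sg : (Fin n → ℝ) → ℝ) (a c b : Fin n) (x : Fin n → ℝ) : ℝ :=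
  ∑ d, (pd d (fun y => sg y * lamR ginv a c b d y) x
    + ∑ e, Γ c d e x * sg x * lamR ginv a e b d x
    + ∑ e, Γ b d e x * sg x * lamR ginv a c e d x
    + ∑ e, Γ d d e x * sg x * lamR ginv a c b e x
    - ∑ e, Γ e d a x * sg x * lamR ginv e c b d x
    - ∑ e, Γ e d e x * sg x * lamR ginv a c b d x)

/-- The STEGR non-metricity conjugate `P^{bc}{}_a` (components `pConj b c a`):
`P^{bc}{}_a = −¼Q^{bc}{}_a + ¼Q^{cb}{}_a + ¼Q_a{}^{bc} + ¼δ^c_a(Q^b − Q̃^b)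
  − ⅛ g^{bc} Q_a − ⅛ δ^b_a Q^c`. -/
def pConj {n : ℕ} (g ginv : Fin n → Fin n → (Fin n → ℝ) → ℝ)
    (Γ : Fin n → Fin n → Fin n → (Fin n → ℝ) → ℝ) (b c a : Fin n) (x : Fin n → ℝ) : ℝ :=
  -(1 / 4) * qUD g ginv Γ b c a x + (1 / 4) * qUD g ginv Γ c b a x
    + (1 / 4) * qDU g ginv Γ a b c x
    + (1 / 4) * kron c a * (qTrUp g ginv Γ b x - qTilUp g ginv Γ b x)
    - (1 / 8) * ginv b c x * qTr g ginv Γ a x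
    - (1 / 8) * kron b a * qTrUp g ginv Γ c x

/-! The divergence of the density `√(−g) Λ_R` is computed by the Leibniz rule: the connection
terms hitting the Kronecker deltas of `Λ_R` cancel, `∇_d √(−g) = ½ √(−g) Q_d` by Jacobi's formula
for `∂_d √(−g)`, and `∇_d g^{bc} = −Q_d{}^{bc}`. Hence
`(1/√(−g)) ∇_d(√(−g) Λ_{Ra}{}^{cbd}) = ⅛(δ^b_a Q^c − g^{bc} Q_a) + ¼(Q_a{}^{bc} − δ^b_a Q̃^c)`,
which removes from `P^{bc}{}_a` exactly its part that is not antisymmetric in `b, c`. -/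

open Finset

lemma sum_kron_mul {n : ℕ} (a : Fin n) (f : Fin n → ℝ) : ∑ d, kron d a * f d = f a := by
  simp [kron]

section Calculus

variable {n : ℕ} {x : Fin n → ℝ}

lemma pd_mul (i : Fin n) {f h : (Fin n → ℝ) → ℝ}
    (hf : DifferentiableAt ℝ f x) (hh : DifferentiableAt ℝ h x) :
    pd i (fun y => f y * h y) x = pd i f x * h x + f x * pd i h x := by
  simp [pd, fderiv_fun_mul hf hh]
  ring

lemma pd_sum (i : Fin n) {f : Fin n → (Fin n → ℝ) → ℝ}
    (hf : ∀ j, DifferentiableAt ℝ (f j) x) :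
    pd i (fun y => ∑ j, f j y) x = ∑ j, pd i (f j) x := by
  simp [pd, fderiv_fun_sum fun j _ => hf j]

lemma differentiableAt_lamR {ginv : Fin n → Fin n → (Fin n → ℝ) → ℝ}
    (hginv : ∀ p q, DifferentiableAt ℝ (ginv p q) x) (a c b e : Fin n) :
    DifferentiableAt ℝ (lamR ginv a c b e) x :=
  (((hginv b c).neg.mul_const _).add ((hginv c e).mul_const _)).const_mul _

lemma pd_lamR {ginv : Fin n → Fin n → (Fin n → ℝ) → ℝ}
    (hginv : ∀ p q, DifferentiableAt ℝ (ginv p q) x) (d a c b e : Fin n) :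
    pd d (lamR ginv a c b e) x = lamR (fun p q => pd d (ginv p q)) a c b e x := by
  have h : HasFDerivAt (lamR ginv a c b e) _ x :=
    (((hginv b c).hasFDerivAt.neg.mul_const (kron e a)).add
      ((hginv c e).hasFDerivAt.mul_const (kron b a))).const_mul (1 / 4)
  simp [pd, lamR, h.fderiv]
  ring

end Calculus

lemma sum_mul_lamR {n : ℕ} (ginv : Fin n → Fin n → (Fin n → ℝ) → ℝ) (x : Fin n → ℝ)
    (a c b : Fin n) (V : Fin n → ℝ) :
    ∑ d, V d * lamR ginv a c b d x
      = (kron b a * ∑ d, ginv c d x * V d - ginv b c x * V a) / 4 := by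
  have hterm : ∀ d, V d * lamR ginv a c b d x
      = kron b a * (ginv c d x * V d) / 4 - kron d a * (ginv b c x * V d) / 4 := fun d => by
    simp only [lamR]
    ring
  simp only [hterm, sum_sub_distrib, ← sum_div, ← mul_sum, sum_kron_mul]
  ring

section InverseMetric

variable {n : ℕ} {g ginv : Fin n → Fin n → (Fin n → ℝ) → ℝ} {x : Fin n → ℝ}

lemma sum_g_mul_ginv
    (hinv : ∀ a b x, ∑ c, ginv a c x * g c b x = if a = b then (1 : ℝ) else 0) (a b : Fin n) :
    ∑ c, g a c x * ginv c b x = kron a b := by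
  have hleft : Matrix.of (fun a b => ginv a b x) * Matrix.of (fun a b => g a b x) = 1 := by
    ext a b
    simp [Matrix.mul_apply, hinv, Matrix.one_apply]
  have hright := congrArg (fun M => M a b) (mul_eq_one_comm.mp hleft)
  simpa [Matrix.mul_apply, Matrix.one_apply, kron] using hright

lemma sum_ginv_mul_sum_mul_g
    (hinv : ∀ a b x, ∑ c, ginv a c x * g c b x = if a = b then (1 : ℝ) else 0)
    (p : Fin n) (F : Fin n → ℝ) :
    ∑ q, ginv p q x * ∑ h, F h * g q h x = F p := by
  calc ∑ q, ginv p q x * ∑ h, F h * g q h x = ∑ h, F h * ∑ q, ginv p q x * g q h x := by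
        simp_rw [mul_sum]
        rw [sum_comm]
        exact sum_congr rfl fun _ _ => sum_congr rfl fun _ _ => by ring
    _ = F p := by simp [hinv]

lemma sum_ginv_mul_sum_g_mul (hgsym : ∀ a b, g a b = g b a)
    (hinv : ∀ a b x, ∑ c, ginv a c x * g c b x = if a = b then (1 : ℝ) else 0)
    (p : Fin n) (F : Fin n → ℝ) :
    ∑ q, ginv p q x * ∑ h, F h * g h q x = F p := by
  simp only [hgsym]
  exact sum_ginv_mul_sum_mul_g hinv p F

lemma pd_ginv
    (hinv : ∀ a b x, ∑ c, ginv a c x * g c b x = if a = b then (1 : ℝ) else 0)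
    (hg : ∀ a b, DifferentiableAt ℝ (g a b) x) (hginv : ∀ a b, DifferentiableAt ℝ (ginv a b) x)
    (d p s : Fin n) :
    pd d (ginv p s) x = -∑ e, ∑ f, ginv p e x * pd d (g e f) x * ginv f s x := by
  have hprod : ∀ q, ∑ r, pd d (ginv p r) x * g r q x = -∑ r, ginv p r x * pd d (g r q) x := by
    intro q
    have h : ∑ r, (pd d (ginv p r) x * g r q x + ginv p r x * pd d (g r q) x) = 0 := by
      rw [← sum_congr rfl fun r _ => pd_mul d (hginv p r) (hg r q),
        ← pd_sum d fun r => (hginv p r).fun_mul (hg r q)]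
      simp [hinv, pd]
    rw [sum_add_distrib] at h
    linarith
  calc pd d (ginv p s) x = ∑ r, pd d (ginv p r) x * ∑ q, g r q x * ginv q s x := by
        simp [sum_g_mul_ginv hinv, kron]
    _ = ∑ q, (∑ r, pd d (ginv p r) x * g r q x) * ginv q s x := by
        simp_rw [mul_sum, sum_mul, mul_assoc]
        exact sum_comm
    _ = ∑ q, (-∑ r, ginv p r x * pd d (g r q) x) * ginv q s x := by simp_rw [hprod]
    _ = _ := by
        simp_rw [neg_mul, sum_neg_distrib, sum_mul]
        rw [sum_comm]

end InverseMetric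

def covDerivInvMetric {n : ℕ} (ginv : Fin n → Fin n → (Fin n → ℝ) → ℝ)
    (Γ : Fin n → Fin n → Fin n → (Fin n → ℝ) → ℝ) (d b c : Fin n) (x : Fin n → ℝ) : ℝ :=
  pd d (ginv b c) x + ∑ e, Γ b d e x * ginv e c x + ∑ e, Γ c d e x * ginv b e x

section Nonmetricity

variable {n : ℕ} {g ginv : Fin n → Fin n → (Fin n → ℝ) → ℝ}
  {Γ : Fin n → Fin n → Fin n → (Fin n → ℝ) → ℝ} {x : Fin n → ℝ}

lemma nonmetQ_comm (hgsym : ∀ a b, g a b = g b a) (a b c : Fin n) :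
    nonmetQ g Γ a b c x = nonmetQ g Γ a c b x := by
  have hsym : ∀ p q, g p q x = g q p x := fun p q => congrFun (hgsym p q) x
  simp only [nonmetQ, hgsym b c, hsym _ b, hsym _ c]
  ring

lemma sum_qDU_self (hgsym : ∀ a b, g a b = g b a) (hginvsym : ∀ a b, ginv a b = ginv b a)
    (c : Fin n) : ∑ d, qDU g ginv Γ d c d x = qTilUp g ginv Γ c x := by
  simp only [qDU, qTilUp, qTil, mul_sum]
  rw [sum_comm]
  refine sum_congr rfl fun e _ => ?_
  rw [sum_comm]
  refine sum_congr rfl fun f _ => sum_congr rfl fun d _ => ?_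
  rw [hginvsym f d, nonmetQ_comm hgsym]
  ring

lemma qTr_eq (hgsym : ∀ a b, g a b = g b a) (hginvsym : ∀ a b, ginv a b = ginv b a)
    (hinv : ∀ a b x, ∑ c, ginv a c x * g c b x = if a = b then (1 : ℝ) else 0) (d : Fin n) :
    qTr g ginv Γ d x = ∑ b, ∑ c, ginv b c x * pd d (g b c) x - 2 * ∑ e, Γ e d e x := by
  have h1 : ∑ b, ∑ c, ginv b c x * ∑ h, Γ h d b x * g h c x = ∑ e, Γ e d e x :=
    sum_congr rfl fun b _ => sum_ginv_mul_sum_g_mul hgsym hinv b fun h => Γ h d b x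
  have h2 : ∑ b, ∑ c, ginv b c x * ∑ h, Γ h d c x * g b h x = ∑ e, Γ e d e x := by
    rw [sum_comm]
    refine sum_congr rfl fun c _ => ?_
    simp only [hginvsym _ c]
    exact sum_ginv_mul_sum_mul_g hinv c fun h => Γ h d c x
  simp only [qTr, nonmetQ, mul_sub, sum_sub_distrib, h1, h2]
  ring

lemma qDU_eq_neg_covDerivInvMetric (hgsym : ∀ a b, g a b = g b a)
    (hginvsym : ∀ a b, ginv a b = ginv b a)
    (hinv : ∀ a b x, ∑ c, ginv a c x * g c b x = if a = b then (1 : ℝ) else 0)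
    (hg : ∀ a b, DifferentiableAt ℝ (g a b) x) (hginv : ∀ a b, DifferentiableAt ℝ (ginv a b) x)
    (d b c : Fin n) :
    qDU g ginv Γ d b c x = -covDerivInvMetric ginv Γ d b c x := by
  have h1 : ∑ e, ∑ f, ginv b e x * ginv c f x * pd d (g e f) x = -pd d (ginv b c) x := by
    rw [pd_ginv hinv hg hginv, neg_neg]
    exact sum_congr rfl fun e _ => sum_congr rfl fun f _ => by rw [hginvsym f c]; ring
  have h2 : ∑ e, ∑ f, ginv b e x * ginv c f x * ∑ h, Γ h d e x * g h f x
      = ∑ e, Γ c d e x * ginv b e x := by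
    refine sum_congr rfl fun e _ => ?_
    simp only [mul_assoc, ← mul_sum, sum_ginv_mul_sum_g_mul hgsym hinv c fun h => Γ h d e x]
    ring
  have h3 : ∑ e, ∑ f, ginv b e x * ginv c f x * ∑ h, Γ h d f x * g e h x
      = ∑ e, Γ b d e x * ginv e c x := by
    rw [sum_comm]
    refine sum_congr rfl fun f _ => ?_
    simp only [mul_left_comm (ginv b _ x), mul_assoc, ← mul_sum,
      sum_ginv_mul_sum_mul_g hinv b fun h => Γ h d f x, hginvsym c f]
    ring
  simp only [qDU, covDerivInvMetric, nonmetQ, mul_sub, sum_sub_distrib, h1, h2, h3]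
  ring

end Nonmetricity

section Divergence

variable {n : ℕ} {g ginv : Fin n → Fin n → (Fin n → ℝ) → ℝ}
  {Γ : Fin n → Fin n → Fin n → (Fin n → ℝ) → ℝ} {sg : (Fin n → ℝ) → ℝ} {x : Fin n → ℝ}

lemma covDivLamR_eq_leibniz (hginv : ∀ p q, DifferentiableAt ℝ (ginv p q) x)
    (hsg : DifferentiableAt ℝ sg x) (a c b : Fin n) :
    covDivLamR ginv Γ sg a c b x
      = ∑ d, (pd d sg x - (∑ e, Γ e d e x) * sg x) * lamR ginv a c b d x
        + sg x / 4 * (kron b a * ∑ d, covDerivInvMetric ginv Γ d c d x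
          - covDerivInvMetric ginv Γ a b c x) := by
  have hpd : ∀ d, pd d (fun y => sg y * lamR ginv a c b d y) x = pd d sg x * lamR ginv a c b d x
      + sg x * lamR (fun p q => pd d (ginv p q)) a c b d x := fun d => by
    rw [pd_mul d hsg (differentiableAt_lamR hginv a c b d), pd_lamR hginv]
  simp only [covDivLamR, hpd]
  simp only [covDerivInvMetric, lamR]
  simp only [kron, mul_ite, ite_mul, mul_one, mul_zero, zero_mul, sum_add_distrib, sum_sub_distrib,
    sum_ite_irrel, sum_const_zero, sum_ite_eq, sum_ite_eq', mem_univ, if_true, mul_add, mul_sub,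
    sub_mul, mul_neg, sum_neg_distrib]
  split_ifs <;> simp only [mul_sum, sum_mul] <;> ring_nf

lemma covDivLamR_eq (hgsym : ∀ a b, g a b = g b a) (hginvsym : ∀ a b, ginv a b = ginv b a)
    (hinv : ∀ a b x, ∑ c, ginv a c x * g c b x = if a = b then (1 : ℝ) else 0)
    (hg : ∀ a b, DifferentiableAt ℝ (g a b) x) (hginv : ∀ a b, DifferentiableAt ℝ (ginv a b) x)
    (hsgd : DifferentiableAt ℝ sg x)
    (hsg : ∀ d, pd d sg x = (1 / 2) * sg x * ∑ b, ∑ c, ginv b c x * pd d (g b c) x)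
    (a c b : Fin n) :
    covDivLamR ginv Γ sg a c b x
      = sg x * ((kron b a * qTrUp g ginv Γ c x - ginv b c x * qTr g ginv Γ a x) / 8
        + (qDU g ginv Γ a b c x - kron b a * qTilUp g ginv Γ c x) / 4) := by
  have hdensity : ∀ d, pd d sg x - (∑ e, Γ e d e x) * sg x = sg x / 2 * qTr g ginv Γ d x :=
    fun d => by rw [hsg d, qTr_eq hgsym hginvsym hinv]; ring
  have hmetric : ∀ d b c, covDerivInvMetric ginv Γ d b c x = -qDU g ginv Γ d b c x :=
    fun d b c => by rw [qDU_eq_neg_covDerivInvMetric hgsym hginvsym hinv hg hginv, neg_neg]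
  simp only [covDivLamR_eq_leibniz hginv hsgd, hdensity, hmetric, mul_assoc, ← mul_sum,
    sum_mul_lamR, sum_neg_distrib, sum_qDU_self hgsym hginvsym, qTrUp]
  ring

lemma pConj_sub_inv_mul_covDivLamR (hgsym : ∀ a b, g a b = g b a)
    (hginvsym : ∀ a b, ginv a b = ginv b a)
    (hinv : ∀ a b x, ∑ c, ginv a c x * g c b x = if a = b then (1 : ℝ) else 0)
    (hg : ∀ a b, DifferentiableAt ℝ (g a b) x) (hginv : ∀ a b, DifferentiableAt ℝ (ginv a b) x)
    (hsgd : DifferentiableAt ℝ sg x) (hsgne : sg x ≠ 0)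
    (hsg : ∀ d, pd d sg x = (1 / 2) * sg x * ∑ b, ∑ c, ginv b c x * pd d (g b c) x)
    (a b c : Fin n) :
    pConj g ginv Γ b c a x - (sg x)⁻¹ * covDivLamR ginv Γ sg a c b x
      = (1 / 4) * (qUD g ginv Γ c b a x - qUD g ginv Γ b c a x)
        - (1 / 4) * (kron c a * qTilUp g ginv Γ b x - kron b a * qTilUp g ginv Γ c x)
        + (1 / 4) * (kron c a * qTrUp g ginv Γ b x - kron b a * qTrUp g ginv Γ c x) := by
  rw [covDivLamR_eq hgsym hginvsym hinv hg hginv hsgd hsg, inv_mul_cancel_left₀ hsgne, pConj]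
  ring

end Divergence

theorem lamT_identity_general {n : ℕ}
    (g ginv : Fin n → Fin n → (Fin n → ℝ) → ℝ)
    (Γ : Fin n → Fin n → Fin n → (Fin n → ℝ) → ℝ)
    (sg : (Fin n → ℝ) → ℝ)
    (hgsym : ∀ a b, g a b = g b a)
    (hginvsym : ∀ a b, ginv a b = ginv b a)
    (hinv : ∀ (a b : Fin n) (x : Fin n → ℝ),
      ∑ c, ginv a c x * g c b x = if a = b then (1 : ℝ) else 0)
    (hgdiff : ∀ a b, Differentiable ℝ (g a b))
    (hginvdiff : ∀ a b, Differentiable ℝ (ginv a b))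
    (hsgdiff : Differentiable ℝ sg)
    (hsgpos : ∀ x, 0 < sg x)
    (hsg : ∀ (d : Fin n) (x : Fin n → ℝ),
      pd d sg x = (1 / 2) * sg x * ∑ b, ∑ c, ginv b c x * pd d (g b c) x) :
    (∀ (a b c : Fin n) (x : Fin n → ℝ),
      pConj g ginv Γ b c a x - (sg x)⁻¹ * covDivLamR ginv Γ sg a c b x
        = (1 / 4) * (qUD g ginv Γ c b a x - qUD g ginv Γ b c a x)
          - (1 / 4) * (kron c a * qTilUp g ginv Γ b x - kron b a * qTilUp g ginv Γ c x)
          + (1 / 4) * (kron c a * qTrUp g ginv Γ b x - kron b a * qTrUp g ginv Γ c x))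
    ∧ (∀ (a b c : Fin n) (x : Fin n → ℝ),
        pConj g ginv Γ b c a x - (sg x)⁻¹ * covDivLamR ginv Γ sg a c b x
          = -(pConj g ginv Γ c b a x - (sg x)⁻¹ * covDivLamR ginv Γ sg a b c x)) := by
  have key := fun a b c x =>
    pConj_sub_inv_mul_covDivLamR (Γ := Γ) hgsym hginvsym hinv (fun p q => hgdiff p q x)
      (fun p q => hginvdiff p q x) (hsgdiff x) (hsgpos x).ne' (fun d => hsg d x) a b c
  exact ⟨key, fun a b c x => by rw [key, key]; ring⟩

/-- **The torsion Lagrange multiplier in STEGR**: the quantity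
`Λ_{Ta}{}^{bc} = P^{bc}{}_a − (1/√(−g)) ∇_d(√(−g) Λ_{Ra}{}^{cbd})` equals
`½Q^{[cb]}{}_a − ½δ^{[c}_a Q̃^{b]} + ½δ^{[c}_a Q^{b]}`, and is therefore antisymmetric
in its last two indices `b, c`. -/
theorem lamT_identity {n : ℕ}
    (g ginv : Fin n → Fin n → (Fin n → ℝ) → ℝ)
    (Γ : Fin n → Fin n → Fin n → (Fin n → ℝ) → ℝ)
    (sg : (Fin n → ℝ) → ℝ)
    (hgsym : ∀ a b, g a b = g b a)
    (hginvsym : ∀ a b, ginv a b = ginv b a)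
    (hinv : ∀ (a b : Fin n) (x : Fin n → ℝ),
      ∑ c, ginv a c x * g c b x = if a = b then (1 : ℝ) else 0)
    (hgdiff : ∀ a b, Differentiable ℝ (g a b))
    (hginvdiff : ∀ a b, Differentiable ℝ (ginv a b))
    (hsgdiff : Differentiable ℝ sg)
    (hsgpos : ∀ x, 0 < sg x)
    (hsg : ∀ (d : Fin n) (x : Fin n → ℝ),
      pd d sg x = (1 / 2) * sg x * ∑ b, ∑ c, ginv b c x * pd d (g b c) x)
    (htorsionfree : ∀ a b c x, Γ a b c x = Γ a c b x)
    (hflat : ∀ a b c d x, riem Γ a b c d x = 0) :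
    (∀ (a b c : Fin n) (x : Fin n → ℝ),
      pConj g ginv Γ b c a x - (sg x)⁻¹ * covDivLamR ginv Γ sg a c b x
        = (1 / 4) * (qUD g ginv Γ c b a x - qUD g ginv Γ b c a x)
          - (1 / 4) * (kron c a * qTilUp g ginv Γ b x - kron b a * qTilUp g ginv Γ c x)
          + (1 / 4) * (kron c a * qTrUp g ginv Γ b x - kron b a * qTrUp g ginv Γ c x))
    ∧ (∀ (a b c : Fin n) (x : Fin n → ℝ),
        pConj g ginv Γ b c a x - (sg x)⁻¹ * covDivLamR ginv Γ sg a c b x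
          = -(pConj g ginv Γ c b a x - (sg x)⁻¹ * covDivLamR ginv Γ sg a b c x)) :=
  lamT_identity_general g ginv Γ sg hgsym hginvsym hinv hgdiff hginvdiff hsgdiff hsgpos hsg
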